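/- arXiv:2112.11546 — 2 statements merged into one kernel-verified Lean document; each statement's English description precedes it below -/
import Mathlib

section
/- Genuineness of counterexamples in abstraction refinement: let F = (I, trans, K, δ) be a featured transition system over state type S, let Φ be a linear-time property over S, and let ρ be a path of the join abstraction α_K(F) with ρ ∉ Φ (an abstract counterexample). Let ψ(ρ) = ⋂_{i ∈ ℕ} δ(ρ i, ρ (i+1)). If K ∩ ψ(ρ) ≠ ∅, then for every k ∈ K ∩ ψ(ρ) the path ρ is a path of π_k(F), hence π_k(F) ⊭ Φ for every such k, and consequently F ⊭ Φ. -/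
/-- `ρ` is a path of the transition system `(I, trans)`. -/
def IsPath {S : Type*} (I : Set S) (trans : Set (S × S)) (ρ : ℕ → S) : Prop :=
  ρ 0 ∈ I ∧ ∀ i, (ρ i, ρ (i + 1)) ∈ trans

/-- The set of paths of a transition system `(I, trans)`. -/
def Paths {S : Type*} (I : Set S) (trans : Set (S × S)) : Set (ℕ → S) :=
  {ρ | IsPath I trans ρ}

namespace IsPath

variable {S : Type*} {I : Set S} {trans : Set (S × S)} {ρ : ℕ → S}

theorem mono {trans' : Set (S × S)} (h : IsPath I trans ρ) (hsub : trans ⊆ trans') :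
    IsPath I trans' ρ :=
  ⟨h.1, fun i => hsub (h.2 i)⟩

theorem sep {p : S × S → Prop} (h : IsPath I trans ρ) (hp : ∀ i, p (ρ i, ρ (i + 1))) :
    IsPath I {t ∈ trans | p t} ρ :=
  ⟨h.1, fun i => ⟨h.2 i, hp i⟩⟩

end IsPath

theorem not_paths_subset_of_isPath {S : Type*} {I : Set S} {trans : Set (S × S)}
    {Φ : Set (ℕ → S)} {ρ : ℕ → S} (hρ : IsPath I trans ρ) (hΦ : ρ ∉ Φ) :
    ¬ Paths I trans ⊆ Φ :=
  fun hsub => hΦ (hsub hρ)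

/-- Genuineness of counterexamples: if `ρ` is a path of `α_K(F)` with `ρ ∉ Φ`
and `K ∩ ψ(ρ) ≠ ∅` where `ψ(ρ) = ⋂ i, δ (ρ i, ρ (i+1))`, then `ρ` is a path of
`π_k(F)` for every `k ∈ K ∩ ψ(ρ)`, hence `π_k(F) ⊭ Φ` for all such `k`, and
consequently `F ⊭ Φ`. -/
theorem genuine_counterexample {S Conf : Type*}
    (I : Set S) (trans : Set (S × S)) (K : Set Conf) (δ : S × S → Set Conf)
    (Φ : Set (ℕ → S)) (ρ : ℕ → S)
    (hρ : IsPath I {t ∈ trans | ∃ k ∈ K, k ∈ δ t} ρ) (hΦ : ρ ∉ Φ)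
    (hne : (K ∩ ⋂ i, δ (ρ i, ρ (i + 1))).Nonempty) :
    (∀ k ∈ K ∩ ⋂ i, δ (ρ i, ρ (i + 1)),
        IsPath I {t ∈ trans | k ∈ δ t} ρ) ∧
    (∀ k ∈ K ∩ ⋂ i, δ (ρ i, ρ (i + 1)),
        ¬ Paths I {t ∈ trans | k ∈ δ t} ⊆ Φ) ∧
    ¬ (∀ k ∈ K, Paths I {t ∈ trans | k ∈ δ t} ⊆ Φ) := by
  have hproj : ∀ k ∈ K ∩ ⋂ i, δ (ρ i, ρ (i + 1)), IsPath I {t ∈ trans | k ∈ δ t} ρ :=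
    fun k hk => (hρ.mono fun _ ht => ht.1).sep (Set.mem_iInter.mp hk.2)
  have hviol : ∀ k ∈ K ∩ ⋂ i, δ (ρ i, ρ (i + 1)), ¬ Paths I {t ∈ trans | k ∈ δ t} ⊆ Φ :=
    fun k hk => not_paths_subset_of_isPath (hproj k hk) hΦ
  obtain ⟨k, hk⟩ := hne
  exact ⟨hproj, hviol, fun hall => hviol k hk (hall k hk.1)⟩
end

section
/- Spuriousness of counterexamples in abstraction refinement: let F = (I, trans, K, δ) be a featured transition system over state type S and let ρ be a path of the join abstraction α_K(F). Let ψ(ρ) = ⋂_{i ∈ ℕ} δ(ρ i, ρ (i+1)). If K ∩ ψ(ρ) = ∅, then ρ is not a path of π_k(F) for any k ∈ K; equivalently, ρ ∉ ⟦F⟧_FTS, so the counterexample ρ is spurious for all variants in K. -/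
theorem IsPath.mem_iInter_of_sep {S Conf : Type*} {I : Set S} {trans : Set (S × S)}
    {δ : S × S → Set Conf} {k : Conf} {ρ : ℕ → S}
    (h : IsPath I {t ∈ trans | k ∈ δ t} ρ) : k ∈ ⋂ i, δ (ρ i, ρ (i + 1)) :=
  Set.mem_iInter.2 fun i => (h.2 i).2

theorem spurious_counterexample_general {S Conf : Type*}
    (I : Set S) (trans : Set (S × S)) (K : Set Conf) (δ : S × S → Set Conf)
    (ρ : ℕ → S)
    (hempty : K ∩ ⋂ i, δ (ρ i, ρ (i + 1)) = ∅) :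
    (∀ k ∈ K, ¬ IsPath I {t ∈ trans | k ∈ δ t} ρ) ∧
    ρ ∉ ⋃ k ∈ K, Paths I {t ∈ trans | k ∈ δ t} := by
  have not_isPath : ∀ k ∈ K, ¬ IsPath I {t ∈ trans | k ∈ δ t} ρ := fun k hk hpath =>
    Set.eq_empty_iff_forall_notMem.1 hempty k ⟨hk, hpath.mem_iInter_of_sep⟩
  refine ⟨not_isPath, fun hmem => ?_⟩
  obtain ⟨k, hk, hpath⟩ := Set.mem_iUnion₂.1 hmem
  exact not_isPath k hk hpath

/-- Spuriousness of counterexamples: if `ρ` is a path of `α_K(F)` and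
`K ∩ ψ(ρ) = ∅` where `ψ(ρ) = ⋂ i, δ (ρ i, ρ (i+1))`, then `ρ` is not a path of
`π_k(F)` for any `k ∈ K`; equivalently `ρ ∉ ⟦F⟧_FTS`. -/
theorem spurious_counterexample {S Conf : Type*}
    (I : Set S) (trans : Set (S × S)) (K : Set Conf) (δ : S × S → Set Conf)
    (ρ : ℕ → S)
    (hρ : IsPath I {t ∈ trans | ∃ k ∈ K, k ∈ δ t} ρ)
    (hempty : K ∩ ⋂ i, δ (ρ i, ρ (i + 1)) = ∅) :
    (∀ k ∈ K, ¬ IsPath I {t ∈ trans | k ∈ δ t} ρ) ∧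
    ρ ∉ ⋃ k ∈ K, Paths I {t ∈ trans | k ∈ δ t} :=
  spurious_counterexample_general I trans K δ ρ hempty
end
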